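/- arXiv:2307.06537 — 4 statements merged into one kernel-verified Lean document; each statement's English description precedes it below -/
import Mathlib

section
/- Let m, p be positive integers, A_c an m×m complex matrix, A_s a p×p complex matrix, G : ℂ^m → ℂ^p continuously differentiable, and F_s : ℝ → ℂ^p continuous. Fix τ ≥ 0 and define Φ_τ : ℂ^m × ℝ → ℂ^p by Φ_τ(X, t) = ∫_{−τ}^{0} e^{−s A_s} G(e^{s A_c} X) ds + ∫_{−τ}^{0} e^{−s A_s} F_s(s+t) ds. Then Φ_τ is differentiable in X and in t, and for all X ∈ ℂ^m and t ∈ ℝ it satisfies the homological equation ∂_t Φ_τ(X,t) + D_X Φ_τ(X,t)[A_c X] − A_s Φ_τ(X,t) = G(X) − e^{τ A_s} G(e^{−τ A_c} X) + F_s(t) − e^{τ A_s} F_s(t−τ), where D_X Φ_τ(X,t)[A_c X] denotes the derivative of Φ_τ(·,t) at X applied to the vector A_c X. -/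
/-!
Substituting `v = s + u`, an integral `∫_{−τ}^0 e^{−sA} g(s+u) ds` equals
`e^{uA} ∫_{u−τ}^u e^{−vA} g(v) dv`, so by the product rule and the fundamental theorem of calculus
its `u`-derivative is `A` times itself plus the boundary terms `g(u) − e^{τA} g(u−τ)`.
The forcing term of `Φ_τ` is of this form with `g = F_s`. Moving `X` along the flow `e^{rA_c}X`
turns the `G`-term into the same form with `g(v) = G(e^{vA_c}X)`, so `D_X Φ_τ [A_c X]` is its
derivative at `r = 0`; differentiability in `X` is differentiation under the integral sign.
-/

open MeasureTheory intervalIntegral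

/-- Matrix exponential over `ℂ`. -/
noncomputable def mexp {n : ℕ} (A : Matrix (Fin n) (Fin n) ℂ) : Matrix (Fin n) (Fin n) ℂ :=
  NormedSpace.exp A

section MatrixExp

variable {n : ℕ} (A : Matrix (Fin n) (Fin n) ℂ)

lemma mexp_add_smul (a b : ℝ) : mexp ((a + b) • A) = mexp (a • A) * mexp (b • A) := by
  rw [add_smul]
  exact Matrix.exp_add_of_commute _ _ (((Commute.refl A).smul_left a).smul_right b)

@[simp] lemma mexp_zero : mexp (0 : Matrix (Fin n) (Fin n) ℂ) = 1 :=
  NormedSpace.exp_zero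

end MatrixExp

noncomputable def mulVecCLM {a b : ℕ} :
    Matrix (Fin a) (Fin b) ℂ →L[ℝ] (Fin b → ℂ) →L[ℝ] (Fin a → ℂ) :=
  LinearMap.toContinuousLinearMap
    { toFun := fun M => LinearMap.toContinuousLinearMap ((Matrix.mulVecLin M).restrictScalars ℝ)
      map_add' := fun M N => by ext; simp
      map_smul' := fun r M => by ext; simp }

@[simp] lemma mulVecCLM_apply_apply {a b : ℕ} (M : Matrix (Fin a) (Fin b) ℂ) (x : Fin b → ℂ) :
    mulVecCLM M x = M.mulVec x := rfl

section BackwardIntegral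

variable {n : ℕ} (A : Matrix (Fin n) (Fin n) ℂ)

lemma hasDerivAt_mulVecCLM_mexp_smul (t : ℝ) :
    HasDerivAt (fun u : ℝ => mulVecCLM (mexp (u • A))) (mulVecCLM (A * mexp (t • A))) t := by
  -- any normed-algebra structure will do: its topology is the product topology used by `mexp`
  let _ : NormedRing (Matrix (Fin n) (Fin n) ℂ) := Matrix.linftyOpNormedRing
  let _ : NormedAlgebra ℝ (Matrix (Fin n) (Fin n) ℂ) := Matrix.linftyOpNormedAlgebra
  exact mulVecCLM.hasFDerivAt.comp_hasDerivAt t (hasDerivAt_exp_smul_const' A t)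

lemma continuous_mulVecCLM_mexp_smul : Continuous fun u : ℝ => mulVecCLM (mexp (u • A)) :=
  continuous_iff_continuousAt.2 fun t => (hasDerivAt_mulVecCLM_mexp_smul A t).continuousAt

lemma continuous_mexp_neg_smul_mulVec {g : ℝ → Fin n → ℂ} (hg : Continuous g) :
    Continuous fun u : ℝ => (mexp ((-u) • A)).mulVec (g u) :=
  ((continuous_mulVecCLM_mexp_smul A).comp continuous_neg).clm_apply hg

noncomputable def bfIntegral (τ : ℝ) (g : ℝ → Fin n → ℂ) (u : ℝ) : Fin n → ℂ :=
  ∫ s in (-τ)..0, (mexp ((-s) • A)).mulVec (g (s + u))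

variable {g : ℝ → Fin n → ℂ}

lemma bfIntegral_eq_mulVec_integral (τ : ℝ) (hg : Continuous g) (u : ℝ) :
    bfIntegral A τ g u =
      (mexp (u • A)).mulVec (∫ v in (u - τ)..u, (mexp ((-v) • A)).mulVec (g v)) := by
  have hshift : ∀ s, (mexp ((-s) • A)).mulVec (g (s + u))
      = (mexp (u • A)).mulVec ((mexp ((-(s + u)) • A)).mulVec (g (s + u))) := fun s => by
    rw [Matrix.mulVec_mulVec, ← mexp_add_smul]; ring_nf
  simp only [bfIntegral, hshift]
  rw [integral_comp_add_right (fun v => (mexp (u • A)).mulVec ((mexp ((-v) • A)).mulVec (g v))),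
    neg_add_eq_sub, zero_add]
  exact (mulVecCLM (mexp (u • A))).intervalIntegral_comp_comm
    ((continuous_mexp_neg_smul_mulVec A hg).intervalIntegrable _ _)

lemma hasDerivAt_bfIntegral (τ : ℝ) (hg : Continuous g) (t : ℝ) :
    HasDerivAt (bfIntegral A τ g)
      (A.mulVec (bfIntegral A τ g t) + g t - (mexp (τ • A)).mulVec (g (t - τ))) t := by
  set h : ℝ → Fin n → ℂ := fun v => (mexp ((-v) • A)).mulVec (g v)
  have hh : Continuous h := continuous_mexp_neg_smul_mulVec A hg
  have hprim : ∀ r, HasDerivAt (fun u => ∫ v in (0 : ℝ)..u, h v) (h r) r := fun r =>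
    (hh.integral_hasStrictDerivAt 0 r).hasDerivAt
  have hwindow : HasDerivAt (fun u => ∫ v in (u - τ)..u, h v) (h t - h (t - τ)) t := by
    refine ((hprim t).sub ((hprim (t - τ)).comp_sub_const t τ)).congr_of_eventuallyEq
      (Filter.Eventually.of_forall fun u => ?_)
    exact (integral_interval_sub_left (hh.intervalIntegrable _ _) (hh.intervalIntegrable _ _)).symm
  have hprod := (hasDerivAt_mulVecCLM_mexp_smul A t).clm_apply hwindow
  rw [show bfIntegral A τ g = fun u => mulVecCLM (mexp (u • A)) (∫ v in (u - τ)..u, h v) from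
    funext (bfIntegral_eq_mulVec_integral A τ hg)]
  refine hprod.congr_deriv ?_
  simp only [mulVecCLM_apply_apply, h, Matrix.mulVec_sub, Matrix.mulVec_mulVec, ← mexp_add_smul,
    add_neg_cancel, zero_smul, mexp_zero, Matrix.one_mulVec, neg_sub, add_sub_cancel]
  abel

end BackwardIntegral

theorem hasFDerivAt_intervalIntegral_of_continuous_fderiv {E F : Type*}
    [NormedAddCommGroup E] [NormedSpace ℝ E] [ProperSpace E]
    [NormedAddCommGroup F] [NormedSpace ℝ F]
    {f : E → ℝ → F} {f' : E → ℝ → E →L[ℝ] F} (hf : Continuous (Function.uncurry f))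
    (hf' : ∀ x s, HasFDerivAt (fun y => f y s) (f' x s) x)
    (hf'c : Continuous (Function.uncurry f')) (a b : ℝ) (x₀ : E) :
    HasFDerivAt (fun x => ∫ s in a..b, f x s) (∫ s in a..b, f' x₀ s) x₀ := by
  obtain ⟨C, hC⟩ := ((isCompact_closedBall x₀ 1).prod isCompact_uIcc).exists_bound_of_continuousOn
    hf'c.continuousOn
  have hfx : ∀ x, Continuous (f x) := fun x => hf.comp (Continuous.prodMk_right x)
  refine intervalIntegral.hasFDerivAt_integral_of_dominated_of_fderiv_le (bound := fun _ => C)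
    (Metric.ball_mem_nhds x₀ zero_lt_one)
    (Filter.Eventually.of_forall fun x => (hfx x).aestronglyMeasurable)
    ((hfx x₀).intervalIntegrable _ _)
    (hf'c.comp (Continuous.prodMk_right x₀)).aestronglyMeasurable
    (Filter.Eventually.of_forall fun s hs x hx => hC (x, s)
      ⟨Metric.ball_subset_closedBall hx, Set.uIoc_subset_uIcc hs⟩)
    intervalIntegrable_const
    (Filter.Eventually.of_forall fun s _ x _ => hf' x s)

theorem differentiable_intervalIntegral_clm_comp {E F H K : Type*}
    [NormedAddCommGroup E] [NormedSpace ℝ E] [ProperSpace E]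
    [NormedAddCommGroup F] [NormedSpace ℝ F] [NormedAddCommGroup H] [NormedSpace ℝ H]
    [NormedAddCommGroup K] [NormedSpace ℝ K]
    {P : ℝ → E →L[ℝ] F} {G : F → H} {Q : ℝ → H →L[ℝ] K}
    (hP : Continuous P) (hG : ContDiff ℝ 1 G) (hQ : Continuous Q) (a b : ℝ) :
    Differentiable ℝ fun x => ∫ s in a..b, Q s (G (P s x)) := by
  have hPx : Continuous fun q : E × ℝ => P q.2 q.1 :=
    (hP.comp continuous_snd).clm_apply continuous_fst
  have hQ' : Continuous fun q : E × ℝ => Q q.2 := hQ.comp continuous_snd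
  exact fun x₀ => (hasFDerivAt_intervalIntegral_of_continuous_fderiv
    (f := fun x s => Q s (G (P s x)))
    (f' := fun x s => (Q s).comp ((fderiv ℝ G (P s x)).comp (P s)))
    (hQ'.clm_apply (hG.continuous.comp hPx))
    (fun x s => (Q s).hasFDerivAt.comp x
      ((hG.differentiable one_ne_zero _).hasFDerivAt.comp x (P s).hasFDerivAt))
    (hQ'.clm_comp (((hG.continuous_fderiv one_ne_zero).comp hPx).clm_comp
      (hP.comp continuous_snd))) a b x₀).differentiableAt

section AlongFlow

variable {m p : ℕ} (A_c : Matrix (Fin m) (Fin m) ℂ) (A_s : Matrix (Fin p) (Fin p) ℂ) (τ : ℝ)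
  {G : (Fin m → ℂ) → (Fin p → ℂ)}

noncomputable def bfIntegralComp (G : (Fin m → ℂ) → (Fin p → ℂ)) (Y : Fin m → ℂ) : Fin p → ℂ :=
  ∫ s in (-τ)..0, (mexp ((-s) • A_s)).mulVec (G ((mexp (s • A_c)).mulVec Y))

lemma differentiable_bfIntegralComp (hG : ContDiff ℝ 1 G) :
    Differentiable ℝ (bfIntegralComp A_c A_s τ G) :=
  differentiable_intervalIntegral_clm_comp (continuous_mulVecCLM_mexp_smul A_c) hG
    ((continuous_mulVecCLM_mexp_smul A_s).comp continuous_neg) _ _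

lemma bfIntegralComp_mexp_smul_mulVec (r : ℝ) (Y : Fin m → ℂ) :
    bfIntegralComp A_c A_s τ G ((mexp (r • A_c)).mulVec Y) =
      bfIntegral A_s τ (fun v => G ((mexp (v • A_c)).mulVec Y)) r := by
  simp only [bfIntegralComp, bfIntegral, Matrix.mulVec_mulVec, ← mexp_add_smul]

lemma fderiv_bfIntegralComp_apply (hG : ContDiff ℝ 1 G) (X : Fin m → ℂ) :
    fderiv ℝ (bfIntegralComp A_c A_s τ G) X (A_c.mulVec X) =
      A_s.mulVec (bfIntegralComp A_c A_s τ G X) + G X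
        - (mexp (τ • A_s)).mulVec (G ((mexp ((-τ) • A_c)).mulVec X)) := by
  have hg : Continuous fun v => G ((mexp (v • A_c)).mulVec X) :=
    hG.continuous.comp ((continuous_mulVecCLM_mexp_smul A_c).clm_apply continuous_const)
  have hflow : HasDerivAt (fun r : ℝ => (mexp (r • A_c)).mulVec X) (A_c.mulVec X) 0 := by
    simpa using (hasDerivAt_mulVecCLM_mexp_smul A_c 0).clm_apply (hasDerivAt_const 0 X)
  have hchain := ((differentiable_bfIntegralComp A_c A_s τ hG X).hasFDerivAt
    ).comp_hasDerivAt_of_eq 0 hflow (by simp)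
  rw [Function.comp_def, funext (bfIntegralComp_mexp_smul_mulVec A_c A_s τ · X)] at hchain
  refine (hchain.unique (hasDerivAt_bfIntegral A_s τ hg 0)).trans ?_
  simp [← bfIntegralComp_mexp_smul_mulVec]

end AlongFlow

theorem bf_parameterization_homological_equation_general
    (m p : ℕ)
    (A_c : Matrix (Fin m) (Fin m) ℂ) (A_s : Matrix (Fin p) (Fin p) ℂ)
    (G : (Fin m → ℂ) → (Fin p → ℂ)) (hG : ContDiff ℝ 1 G)
    (F_s : ℝ → (Fin p → ℂ)) (hF : Continuous F_s)
    (τ : ℝ)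
    (Φ : (Fin m → ℂ) → ℝ → (Fin p → ℂ))
    (hΦ : ∀ X t, Φ X t =
      (∫ s in (-τ)..0, (mexp ((-s) • A_s)).mulVec (G ((mexp (s • A_c)).mulVec X)))
        + ∫ s in (-τ)..0, (mexp ((-s) • A_s)).mulVec (F_s (s + t))) :
    ∀ (X : Fin m → ℂ) (t : ℝ),
      DifferentiableAt ℝ (fun Y => Φ Y t) X ∧
      DifferentiableAt ℝ (fun u => Φ X u) t ∧
      deriv (fun u => Φ X u) t
        + fderiv ℝ (fun Y => Φ Y t) X (A_c.mulVec X)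
        - A_s.mulVec (Φ X t)
      = G X - (mexp (τ • A_s)).mulVec (G ((mexp ((-τ) • A_c)).mulVec X))
        + F_s t - (mexp (τ • A_s)).mulVec (F_s (t - τ)) := by
  intro X t
  have hΦ' : ∀ Y u, Φ Y u = bfIntegralComp A_c A_s τ G Y + bfIntegral A_s τ F_s u := hΦ
  have hΦX : (fun u => Φ X u) = fun u => bfIntegralComp A_c A_s τ G X + bfIntegral A_s τ F_s u :=
    funext (hΦ' X)
  have hΦt : (fun Y => Φ Y t) = fun Y => bfIntegralComp A_c A_s τ G Y + bfIntegral A_s τ F_s t :=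
    funext (hΦ' · t)
  have hforced := hasDerivAt_bfIntegral A_s τ hF t
  refine ⟨hΦt ▸ (differentiable_bfIntegralComp A_c A_s τ hG X).add_const _,
    hΦX ▸ hforced.differentiableAt.const_add _, ?_⟩
  rw [hΦX, hΦt, deriv_const_add, fderiv_add_const, hforced.deriv,
    fderiv_bfIntegralComp_apply A_c A_s τ hG, hΦ' X t, Matrix.mulVec_add]
  abel

/-- The finite-`τ` backward–forward parameterization
`Φ_τ(X,t) = ∫_{−τ}^0 e^{−sA_s} G(e^{sA_c}X) ds + ∫_{−τ}^0 e^{−sA_s} F_s(s+t) ds`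
is differentiable in `X` and in `t`, and satisfies the homological equation
`∂_t Φ_τ + D_X Φ_τ [A_c X] − A_s Φ_τ = G(X) − e^{τA_s} G(e^{−τA_c}X) + F_s(t) − e^{τA_s} F_s(t−τ)`. -/
theorem bf_parameterization_homological_equation
    (m p : ℕ) (hm : 0 < m) (hp : 0 < p)
    (A_c : Matrix (Fin m) (Fin m) ℂ) (A_s : Matrix (Fin p) (Fin p) ℂ)
    (G : (Fin m → ℂ) → (Fin p → ℂ)) (hG : ContDiff ℝ 1 G)
    (F_s : ℝ → (Fin p → ℂ)) (hF : Continuous F_s)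
    (τ : ℝ) (hτ : 0 ≤ τ)
    (Φ : (Fin m → ℂ) → ℝ → (Fin p → ℂ))
    (hΦ : ∀ X t, Φ X t =
      (∫ s in (-τ)..0, (mexp ((-s) • A_s)).mulVec (G ((mexp (s • A_c)).mulVec X)))
        + ∫ s in (-τ)..0, (mexp ((-s) • A_s)).mulVec (F_s (s + t))) :
    ∀ (X : Fin m → ℂ) (t : ℝ),
      DifferentiableAt ℝ (fun Y => Φ Y t) X ∧
      DifferentiableAt ℝ (fun u => Φ X u) t ∧
      deriv (fun u => Φ X u) t
        + fderiv ℝ (fun Y => Φ Y t) X (A_c.mulVec X)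
        - A_s.mulVec (Φ X t)
      = G X - (mexp (τ • A_s)).mulVec (G ((mexp ((-τ) • A_c)).mulVec X))
        + F_s t - (mexp (τ • A_s)).mulVec (F_s (t - τ)) :=
  bf_parameterization_homological_equation_general m p A_c A_s G hG F_s hF τ Φ hΦ
end

section
/- Let N, k, m_c be integers with k ≥ 1 and 1 ≤ m_c < N. Let λ_1, …, λ_N ∈ ℂ and A = diag(λ_1,…,λ_N) on ℂ^N with standard basis e_1,…,e_N. Let Π_c be the projection zeroing coordinates m_c+1,…,N, Π_s = I − Π_c, A_c = Π_c A, A_s = Π_s A, and H_c = range(Π_c). Let G_k : (ℂ^N)^k → ℂ^N be k-multilinear with coefficients G^n_{j_1⋯j_k} = (G_k(e_{j_1},…,e_{j_k}))_n. Assume Re λ_n < 0 for all n > m_c, and that for every n > m_c, every tuple (j_1,…,j_k) ∈ {1,…,m_c}^k with G^n_{j_1⋯j_k} ≠ 0, and every subset S ⊆ {1,…,k}, Re(λ_n − Σ_{p∈S} λ_{j_p}) < 0. Let F ∈ ℂ^N, and for X ∈ H_c let p_X(s) = e^{sA_c}X − ∫_s^0 e^{(s−s′)A_c} Π_c F ds′.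 For τ ≥ 0 set q_{X,τ} = ∫_{−τ}^{0} e^{−s A_s} ( Π_s G_k(p_X(s),…,p_X(s)) + Π_s F ) ds, and let 𝔍_F(X) = ∫_{−∞}^{0} e^{−s A_s} ( Π_s G_k(p_X(s),…,p_X(s)) + Π_s F ) ds. Then for every X ∈ H_c, lim_{τ→∞} ‖q_{X,τ} − 𝔍_F(X)‖ = 0. -/
/-!
Since `q X τ` is the truncation to `[-τ, 0]` of the integral defining `J X`, it suffices that the
integrand is integrable on `(-∞, 0]`. Each resolved coordinate of `p_X(s)` is bounded by
`C (1 - s) e^{s min(Re λ_i, 0)}`. Expanding `G_k` into monomials, the `n`-th stable coordinate of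
the integrand is a sum of terms bounded by `C (1 - s)^k e^{ε s}` with
`ε = -Re(λ_n - ∑_{q ∈ S} λ_{j_q})`, where `S` collects the factors with `Re λ_{j_q} ≤ 0`;
non-resonance makes `ε` positive, so the exponential decay beats the polynomial growth.
-/

open MeasureTheory intervalIntegral Filter

/-- Projection of `ℂ^N` keeping only the first `m_c` (resolved) coordinates. -/
def projC (N m_c : ℕ) (v : Fin N → ℂ) : Fin N → ℂ :=
  fun i => if (i : ℕ) < m_c then v i else 0

/-- Projection of `ℂ^N` onto the unresolved coordinates `m_c, …, N−1` (0-indexed). -/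
def projS (N m_c : ℕ) (v : Fin N → ℂ) : Fin N → ℂ :=
  fun i => if (i : ℕ) < m_c then 0 else v i

/-- The resolved subspace `H_c` of `ℂ^N`: vectors whose unresolved coordinates vanish. -/
def resolvedSubspace (N m_c : ℕ) : Set (Fin N → ℂ) :=
  {X | ∀ i : Fin N, m_c ≤ (i : ℕ) → X i = 0}

open Set Matrix
open scoped Nat Real Complex

lemma one_sub_pow_mul_exp_le (k : ℕ) {ε s : ℝ} (hε : 0 < ε) (hs : s ≤ 1) :
    (1 - s) ^ k * rexp (ε * s) ≤ k ! / (ε / 2) ^ k * rexp (ε / 2) * rexp (ε / 2 * s) := by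
  have hpow := Real.pow_div_factorial_le_exp (x := ε / 2 * (1 - s)) (by nlinarith) k
  rw [mul_pow, div_le_iff₀ (by positivity)] at hpow
  have hsplit : rexp (ε / 2) * rexp (ε / 2 * s) = rexp (ε / 2 * (1 - s)) * rexp (ε * s) := by
    rw [← Real.exp_add, ← Real.exp_add]; ring_nf
  have hle : (1 - s) ^ k ≤ k ! / (ε / 2) ^ k * rexp (ε / 2 * (1 - s)) := by
    rw [div_mul_eq_mul_div, le_div_iff₀ (by positivity)]
    linarith
  rw [mul_assoc, hsplit, ← mul_assoc]
  exact mul_le_mul_of_nonneg_right hle (Real.exp_pos _).le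

lemma integrableOn_Iic_of_norm_le_pow_mul_exp {E : Type*} [NormedAddCommGroup E] {f : ℝ → E}
    {C ε : ℝ} (k : ℕ) (hε : 0 < ε) (hf : AEStronglyMeasurable f (volume.restrict (Iic 0)))
    (hbound : ∀ s ≤ 0, ‖f s‖ ≤ C * ((1 - s) ^ k * rexp (ε * s))) :
    IntegrableOn f (Iic 0) := by
  refine Integrable.mono' ((integrableOn_exp_mul_Iic (half_pos hε) 0).const_mul
    (|C| * (k ! / (ε / 2) ^ k * rexp (ε / 2)))) hf ?_
  filter_upwards [ae_restrict_mem measurableSet_Iic] with s (hs : s ≤ 0)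
  have hs1 : 0 ≤ 1 - s := by linarith
  calc ‖f s‖ ≤ C * ((1 - s) ^ k * rexp (ε * s)) := hbound s hs
    _ ≤ |C| * ((1 - s) ^ k * rexp (ε * s)) :=
      mul_le_mul_of_nonneg_right (le_abs_self C) (by positivity)
    _ ≤ |C| * (k ! / (ε / 2) ^ k * rexp (ε / 2) * rexp (ε / 2 * s)) :=
      mul_le_mul_of_nonneg_left (one_sub_pow_mul_exp_le k hε (by linarith)) (abs_nonneg C)
    _ = _ := by ring

lemma integrableOn_Iic_exp_mul_prod {ι : Type*} [Fintype ι] {μ : ℂ} {a : ι → ℂ}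
    (hres : ∀ S : Finset ι, (μ - ∑ q ∈ S, a q).re < 0) {w : ι → ℝ → ℂ}
    (hw : ∀ q, Continuous (w q)) {C : ι → ℝ}
    (hwb : ∀ q, ∀ s ≤ 0, ‖w q s‖ ≤ C q * (1 - s) * rexp (s * min (a q).re 0)) :
    IntegrableOn (fun s : ℝ => cexp (-s * μ) * ∏ q, w q s) (Iic 0) := by
  classical
  set S₀ := Finset.univ.filter fun q => (a q).re ≤ 0
  have hmin : ∑ q, min (a q).re 0 = ∑ q ∈ S₀, (a q).re := by
    simp only [S₀, Finset.sum_filter, min_def]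
  refine integrableOn_Iic_of_norm_le_pow_mul_exp (C := ∏ q, C q) (Fintype.card ι)
    (neg_pos.2 (hres S₀)) (by fun_prop : Continuous _).aestronglyMeasurable fun s hs => ?_
  have hprod : ∏ q, ‖w q s‖ ≤ ∏ q, (C q * (1 - s) * rexp (s * min (a q).re 0)) :=
    Finset.prod_le_prod (fun q _ => norm_nonneg _) (fun q _ => hwb q s hs)
  calc ‖cexp (-s * μ) * ∏ q, w q s‖ = rexp (-s * μ.re) * ∏ q, ‖w q s‖ := by
        simp [Complex.norm_exp, norm_prod]
    _ ≤ rexp (-s * μ.re) * ∏ q, (C q * (1 - s) * rexp (s * min (a q).re 0)) :=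
        mul_le_mul_of_nonneg_left hprod (Real.exp_pos _).le
    _ = (∏ q, C q) * ((1 - s) ^ Fintype.card ι * rexp (-(μ - ∑ q ∈ S₀, a q).re * s)) := by
        rw [Finset.prod_mul_distrib, Finset.prod_mul_distrib, Finset.prod_const,
          ← Real.exp_sum, ← Finset.mul_sum, hmin, Finset.card_univ, Complex.sub_re,
          Complex.re_sum]
        rw [show -(μ.re - ∑ q ∈ S₀, (a q).re) * s = -s * μ.re + s * ∑ q ∈ S₀, (a q).re by ring,
          Real.exp_add]
        ring

lemma continuous_exp_mul_sub_integral (μ x c : ℂ) :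
    Continuous fun s : ℝ => cexp (s * μ) * x - ∫ u in s..0, cexp (u * μ) * c := by
  have hc : Continuous fun u : ℝ => cexp (u * μ) * c := by fun_prop
  simp_rw [integral_symm (0 : ℝ)]
  exact (by fun_prop : Continuous fun s : ℝ => cexp (s * μ) * x).sub
    (continuous_primitive (fun a b => hc.intervalIntegrable a b) 0).neg

lemma norm_exp_mul_sub_integral_le (μ x c : ℂ) {s : ℝ} (hs : s ≤ 0) :
    ‖cexp (s * μ) * x - ∫ u in s..0, cexp (u * μ) * c‖ ≤
      (‖x‖ + ‖c‖) * (1 - s) * rexp (s * min μ.re 0) := by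
  set E := rexp (s * min μ.re 0)
  have hexp : ∀ u ∈ Icc s 0, ‖cexp (u * μ)‖ ≤ E := by
    rintro u ⟨hsu, hu0⟩
    rw [Complex.norm_exp, Complex.re_ofReal_mul]
    refine Real.exp_le_exp.2 ?_
    rcases le_total μ.re 0 with h | h
    · rw [min_eq_left h]; nlinarith
    · rw [min_eq_right h]; nlinarith
  have hx : ‖cexp (s * μ) * x‖ ≤ E * ‖x‖ := by
    rw [norm_mul]; gcongr; exact hexp s ⟨le_rfl, hs⟩
  have hint : ‖∫ u in s..0, cexp (u * μ) * c‖ ≤ E * ‖c‖ * |0 - s| := by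
    refine norm_integral_le_of_norm_le_const fun u hu => ?_
    rw [uIoc_of_le hs] at hu
    rw [norm_mul]; gcongr; exact hexp u ⟨hu.1.le, hu.2⟩
  rw [zero_sub, abs_neg, abs_of_nonpos hs] at hint
  have hE : 0 ≤ E := (Real.exp_pos _).le
  calc _ ≤ ‖cexp (s * μ) * x‖ + ‖∫ u in s..0, cexp (u * μ) * c‖ := norm_sub_le _ _
    _ ≤ E * ‖x‖ + E * ‖c‖ * -s := add_le_add hx hint
    _ ≤ (‖x‖ + ‖c‖) * (1 - s) * E := by
      nlinarith [mul_nonneg hE (norm_nonneg x), mul_nonneg hE (norm_nonneg c)]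

lemma MultilinearMap.apply_eq_sum_prod_smul_single {R ι n M : Type*} [CommSemiring R]
    [Fintype ι] [DecidableEq ι] [Fintype n] [DecidableEq n] [AddCommMonoid M] [Module R M]
    (G : MultilinearMap R (fun _ : ι => n → R) M) (v : ι → n → R) :
    G v = ∑ j : ι → n, (∏ q, v q (j q)) • G fun q => Pi.single (j q) 1 := by
  conv_lhs => rw [show v = fun q => ∑ i, v q i • Pi.single i 1 from
    funext fun q => pi_eq_sum_univ' (v q)]
  simp_rw [G.map_sum, G.map_smul_univ]

lemma mexp_smul_diagonal {N : ℕ} (t : ℝ) (d : Fin N → ℂ) :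
    mexp (t • diagonal d) = diagonal fun i => cexp (t * d i) := by
  rw [mexp, ← diagonal_smul, exp_diagonal]
  congr 1
  funext i
  simp only [Pi.exp_def, Pi.smul_apply, Complex.real_smul, ← Complex.exp_eq_exp_ℂ]

lemma mexp_smul_diagonal_mulVec_apply {N : ℕ} (t : ℝ) (d v : Fin N → ℂ) (i : Fin N) :
    (mexp (t • diagonal d) *ᵥ v) i = cexp (t * d i) * v i := by
  rw [mexp_smul_diagonal, mulVec_diagonal]

/-- The paper's `p_X`, with `A_c = diag (Π_c λ)`. -/
noncomputable def backwardSolution (N m_c : ℕ) (lam F X : Fin N → ℂ) (s : ℝ) : Fin N → ℂ :=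
  mexp (s • diagonal (projC N m_c lam)) *ᵥ X -
    ∫ s' in s..0, mexp ((s - s') • diagonal (projC N m_c lam)) *ᵥ projC N m_c F

section backwardSolution

variable {N m_c : ℕ} {lam F X : Fin N → ℂ}

lemma backwardSolution_apply (s : ℝ) (i : Fin N) :
    backwardSolution N m_c lam F X s i = cexp (s * projC N m_c lam i) * X i -
      ∫ u in s..0, cexp (u * projC N m_c lam i) * projC N m_c F i := by
  have hint : IntervalIntegrable
      (fun s' : ℝ => mexp ((s - s') • diagonal (projC N m_c lam)) *ᵥ projC N m_c F) volume s 0 := by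
    refine Continuous.intervalIntegrable (continuous_pi fun j => ?_) _ _
    simp_rw [mexp_smul_diagonal_mulVec_apply]
    fun_prop
  rw [backwardSolution, Pi.sub_apply, mexp_smul_diagonal_mulVec_apply]
  congr 1
  refine ((ContinuousLinearMap.proj (R := ℂ) i).intervalIntegral_comp_comm hint).symm.trans ?_
  simp only [ContinuousLinearMap.proj_apply, mexp_smul_diagonal_mulVec_apply]
  rw [integral_comp_sub_left (fun u : ℝ => cexp (u * projC N m_c lam i) * projC N m_c F i) s,
    sub_zero, sub_self]

lemma continuous_backwardSolution : Continuous (backwardSolution N m_c lam F X) :=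
  continuous_pi fun i => by
    simp_rw [backwardSolution_apply]
    exact continuous_exp_mul_sub_integral _ _ _

lemma backwardSolution_mem_resolvedSubspace (hX : X ∈ resolvedSubspace N m_c) (s : ℝ) :
    backwardSolution N m_c lam F X s ∈ resolvedSubspace N m_c := fun i hi => by
  simp [backwardSolution_apply, projC, not_lt.2 hi, hX i hi]

lemma norm_backwardSolution_apply_le {i : Fin N} (hi : (i : ℕ) < m_c) {s : ℝ} (hs : s ≤ 0) :
    ‖backwardSolution N m_c lam F X s i‖ ≤
      (‖X i‖ + ‖F i‖) * (1 - s) * rexp (s * min (lam i).re 0) := by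
  simpa only [backwardSolution_apply, projC, if_pos hi] using
    norm_exp_mul_sub_integral_le (lam i) (X i) (F i) hs

end backwardSolution

lemma integrableOn_Iic_stable_integrand {N m_c k : ℕ} {lam : Fin N → ℂ}
    {G : MultilinearMap ℂ (fun _ : Fin k => Fin N → ℂ) (Fin N → ℂ)}
    (hstable : ∀ n : Fin N, m_c ≤ (n : ℕ) → (lam n).re < 0)
    (hNR : ∀ n : Fin N, m_c ≤ (n : ℕ) →
      ∀ j : Fin k → Fin N, (∀ q : Fin k, ((j q : ℕ) < m_c)) →
        (G fun q => Pi.single (j q) (1 : ℂ)) n ≠ 0 →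
        ∀ S : Finset (Fin k), (lam n - ∑ q ∈ S, lam (j q)).re < 0)
    (F : Fin N → ℂ) {p : ℝ → Fin N → ℂ} (hp : Continuous p)
    (hp_mem : ∀ s, p s ∈ resolvedSubspace N m_c) {C : Fin N → ℝ}
    (hp_le : ∀ i : Fin N, (i : ℕ) < m_c → ∀ s ≤ 0,
      ‖p s i‖ ≤ C i * (1 - s) * rexp (s * min (lam i).re 0)) :
    IntegrableOn (fun s : ℝ => mexp ((-s) • diagonal (projS N m_c lam)) *ᵥ
      (projS N m_c (G fun _ => p s) + projS N m_c F)) (Iic 0) := by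
  classical
  refine integrable_pi_iff.2 fun n => ?_
  simp only [mexp_smul_diagonal_mulVec_apply, Pi.add_apply, projS]
  split_ifs with hn
  · simp
  replace hn := not_lt.1 hn
  set g := fun j : Fin k → Fin N => (G fun q => Pi.single (j q) (1 : ℂ)) n
  have hG : ∀ s, (G fun _ => p s) n = ∑ j, (∏ q, p s (j q)) * g j := fun s => by
    rw [G.apply_eq_sum_prod_smul_single, Finset.sum_apply]
    rfl
  simp_rw [hG, mul_add, Finset.mul_sum, ← mul_assoc]
  refine (integrable_finsetSum _ fun j _ => ?_).add ?_
  · by_cases hj : ∀ q, (j q : ℕ) < m_c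
    · by_cases hg : g j = 0
      · simp [hg]
      push_cast
      exact (integrableOn_Iic_exp_mul_prod (hNR n hn j hj hg)
        (fun q => (continuous_apply (j q)).comp hp) (fun q => hp_le (j q) (hj q))).mul_const _
    · obtain ⟨q, hq⟩ := not_forall.1 hj
      have hzero : ∀ s, ∏ q, p s (j q) = 0 := fun s =>
        Finset.prod_eq_zero (Finset.mem_univ q) (hp_mem s (j q) (not_lt.1 hq))
      simp [hzero]
  · have := integrableOn_exp_mul_complex_Iic (a := -lam n) (by simpa using hstable n hn) 0
    simpa [mul_comm] using this.mul_const (F n)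

theorem bf_parameterization_tendsto_lyapunov_perron_general
    (N k m_c : ℕ)
    (lam : Fin N → ℂ)
    (A_c A_s : Matrix (Fin N) (Fin N) ℂ)
    (hAc : A_c = Matrix.diagonal (fun i : Fin N => if (i : ℕ) < m_c then lam i else 0))
    (hAs : A_s = Matrix.diagonal (fun i : Fin N => if (i : ℕ) < m_c then 0 else lam i))
    (G_k : MultilinearMap ℂ (fun _ : Fin k => (Fin N → ℂ)) (Fin N → ℂ))
    (hstable : ∀ n : Fin N, m_c ≤ (n : ℕ) → (lam n).re < 0)
    (hNR : ∀ n : Fin N, m_c ≤ (n : ℕ) →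
      ∀ j : Fin k → Fin N, (∀ q : Fin k, ((j q : ℕ) < m_c)) →
        (G_k fun q => Pi.single (j q) (1 : ℂ)) n ≠ 0 →
        ∀ S : Finset (Fin k), (lam n - ∑ q ∈ S, lam (j q)).re < 0)
    (F : Fin N → ℂ)
    (pX : (Fin N → ℂ) → ℝ → (Fin N → ℂ))
    (hpX : ∀ (X : Fin N → ℂ) (s : ℝ), pX X s = (mexp (s • A_c)).mulVec X
      - ∫ s' in s..0, (mexp ((s - s') • A_c)).mulVec (projC N m_c F))
    (q : (Fin N → ℂ) → ℝ → (Fin N → ℂ))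
    (hq : ∀ (X : Fin N → ℂ) (τ : ℝ), q X τ = ∫ s in (-τ)..0,
      (mexp ((-s) • A_s)).mulVec (projS N m_c (G_k fun _ => pX X s) + projS N m_c F))
    (J : (Fin N → ℂ) → (Fin N → ℂ))
    (hJ : ∀ X : Fin N → ℂ, J X = ∫ s in Set.Iic (0 : ℝ),
      (mexp ((-s) • A_s)).mulVec (projS N m_c (G_k fun _ => pX X s) + projS N m_c F)) :
    ∀ X ∈ resolvedSubspace N m_c,
      Tendsto (fun τ : ℝ => ‖q X τ - J X‖) atTop (nhds 0) := by
  intro X hX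
  have hp : pX X = backwardSolution N m_c lam F X := funext fun s => by rw [hpX, hAc]; rfl
  have hint := integrableOn_Iic_stable_integrand (G := G_k) hstable hNR F
    continuous_backwardSolution (backwardSolution_mem_resolvedSubspace hX)
    fun i hi s hs => norm_backwardSolution_apply_le (F := F) hi hs
  rw [← hp] at hint
  have hlim : Tendsto (q X) atTop (nhds (J X)) := by
    rw [funext (hq X), hJ X, hAs]
    exact intervalIntegral_tendsto_integral_Iic 0 hint tendsto_neg_atTop_atBot
  simpa using (hlim.sub_const (J X)).norm

/-- The finite-`τ` backward–forward parameterization `q_{X,τ}` converges, as the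
backward integration time `τ → ∞`, to the Lyapunov–Perron integral `𝔍_F(X)`. -/
theorem bf_parameterization_tendsto_lyapunov_perron
    (N k m_c : ℕ) (hk : 1 ≤ k) (hmc : 1 ≤ m_c) (hmcN : m_c < N)
    (lam : Fin N → ℂ)
    (A_c A_s : Matrix (Fin N) (Fin N) ℂ)
    (hAc : A_c = Matrix.diagonal (fun i : Fin N => if (i : ℕ) < m_c then lam i else 0))
    (hAs : A_s = Matrix.diagonal (fun i : Fin N => if (i : ℕ) < m_c then 0 else lam i))
    (G_k : MultilinearMap ℂ (fun _ : Fin k => (Fin N → ℂ)) (Fin N → ℂ))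
    (hstable : ∀ n : Fin N, m_c ≤ (n : ℕ) → (lam n).re < 0)
    (hNR : ∀ n : Fin N, m_c ≤ (n : ℕ) →
      ∀ j : Fin k → Fin N, (∀ q : Fin k, ((j q : ℕ) < m_c)) →
        (G_k fun q => Pi.single (j q) (1 : ℂ)) n ≠ 0 →
        ∀ S : Finset (Fin k), (lam n - ∑ q ∈ S, lam (j q)).re < 0)
    (F : Fin N → ℂ)
    (pX : (Fin N → ℂ) → ℝ → (Fin N → ℂ))
    (hpX : ∀ (X : Fin N → ℂ) (s : ℝ), pX X s = (mexp (s • A_c)).mulVec X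
      - ∫ s' in s..0, (mexp ((s - s') • A_c)).mulVec (projC N m_c F))
    (q : (Fin N → ℂ) → ℝ → (Fin N → ℂ))
    (hq : ∀ (X : Fin N → ℂ) (τ : ℝ), q X τ = ∫ s in (-τ)..0,
      (mexp ((-s) • A_s)).mulVec (projS N m_c (G_k fun _ => pX X s) + projS N m_c F))
    (J : (Fin N → ℂ) → (Fin N → ℂ))
    (hJ : ∀ X : Fin N → ℂ, J X = ∫ s in Set.Iic (0 : ℝ),
      (mexp ((-s) • A_s)).mulVec (projS N m_c (G_k fun _ => pX X s) + projS N m_c F)) :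
    ∀ X ∈ resolvedSubspace N m_c,
      Tendsto (fun τ : ℝ => ‖q X τ - J X‖) atTop (nhds 0) :=
  bf_parameterization_tendsto_lyapunov_perron_general N k m_c lam A_c A_s hAc hAs G_k hstable hNR F
    pX hpX q hq J hJ
end

section
/- Let N, k, m_c be integers with k ≥ 1 and 1 ≤ m_c < N. Let λ_1, …, λ_N ∈ ℂ and A = diag(λ_1,…,λ_N) on ℂ^N with standard basis e_1,…,e_N. Let A_c be the diagonal matrix with entries λ_1,…,λ_{m_c},0,…,0, and let G_k : (ℂ^N)^k → ℂ^N be k-multilinear with coefficients G^n_{j_1⋯j_k} = (G_k(e_{j_1},…,e_{j_k}))_n. Fix n with m_c < n ≤ N and assume Re(λ_{j_1} + ⋯ + λ_{j_k} − λ_n) > 0 for every tuple (j_1,…,j_k) ∈ {1,…,m_c}^k with G^n_{j_1⋯j_k} ≠ 0. Then for every X = Σ_{j=1}^{m_c} X_j e_j, the improper integral ∫_{−∞}^{0} e^{−s λ_n} (G_k(e^{sA_c}X, …, e^{sA_c}X))_n ds converges and equals Σ_{(j_1,…,j_k) ∈ {1,…,m_c}^k} G^n_{j_1⋯j_k} X_{j_1}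 ⋯ X_{j_k} / (λ_{j_1} + ⋯ + λ_{j_k} − λ_n). -/
open MeasureTheory intervalIntegral

/-!
Along the flow `s ↦ e^{sA_c} X` the `j`-th centre coordinate is `e^{s λ_j} X_j`, so by
multilinearity the integrand is a finite sum of exponentials
`G^n_{j_1⋯j_k} X_{j_1} ⋯ X_{j_k} e^{(λ_{j_1} + ⋯ + λ_{j_k} − λ_n) s}`. Each term with a nonzero
coefficient decays as `s → −∞` by the non-resonance condition, and integrates over `(−∞, 0]`
to its coefficient divided by the exponent.
-/

theorem MultilinearMap.map_const_sum_smul {R ι κ V M : Type*} [CommSemiring R]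
    [AddCommMonoid V] [Module R V] [AddCommMonoid M] [Module R M]
    [DecidableEq ι] [Fintype ι] [Fintype κ]
    (f : MultilinearMap R (fun _ : ι => V) M) (c : κ → R) (v : κ → V) :
    (f fun _ => ∑ i, c i • v i) = ∑ j : ι → κ, (∏ q, c (j q)) • f fun q => v (j q) := by
  rw [f.map_sum]
  simp_rw [f.map_smul_univ]

theorem sum_castLE_smul_single {R : Type*} [Semiring R] {m N : ℕ} (h : m ≤ N)
    {x : Fin N → R} (hx : ∀ i : Fin N, m ≤ (i : ℕ) → x i = 0) :
    ∑ i : Fin m, x (Fin.castLE h i) • Pi.single (Fin.castLE h i) (1 : R) = x := by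
  conv_rhs => rw [← Finset.univ_sum_single x]
  refine Fintype.sum_of_injective (Fin.castLE h) (Fin.castLE_injective h) _ _ ?_ ?_
  · intro i hi
    simp [hx i (not_lt.mp fun hlt => hi ⟨⟨i, hlt⟩, rfl⟩)]
  · intro i
    rw [← Pi.single_smul', smul_eq_mul, mul_one]

theorem mexp_smul_diagonal_mulVec {N : ℕ} (d : Fin N → ℂ) (s : ℝ) (x : Fin N → ℂ) :
    (mexp (s • Matrix.diagonal d)).mulVec x = fun i => Complex.exp (s * d i) * x i := by
  ext i
  rw [← Matrix.diagonal_smul, mexp, Matrix.exp_diagonal, Matrix.mulVec_diagonal, Pi.exp_def,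
    Complex.exp_eq_exp_ℂ]
  rfl

theorem integrableOn_const_mul_cexp_Iic {c a : ℂ} (h : c ≠ 0 → 0 < a.re) (t : ℝ) :
    IntegrableOn (fun x : ℝ => c * Complex.exp (a * x)) (Set.Iic t) := by
  by_cases hc : c = 0
  · simp [hc]
  · exact (integrableOn_exp_mul_complex_Iic (h hc) t).const_mul c

theorem integral_const_mul_cexp_Iic_zero {c a : ℂ} (h : c ≠ 0 → 0 < a.re) :
    ∫ x : ℝ in Set.Iic 0, c * Complex.exp (a * x) = c / a := by
  by_cases hc : c = 0
  · simp [hc]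
  · rw [MeasureTheory.integral_const_mul, integral_exp_mul_complex_Iic (h hc)]
    simp [div_eq_mul_inv]

theorem lyapunov_perron_integral_closed_form_general
    (N k m_c : ℕ) (hmcN : m_c < N)
    (lam : Fin N → ℂ)
    (A_c : Matrix (Fin N) (Fin N) ℂ)
    (hAc : A_c = Matrix.diagonal (fun i : Fin N => if (i : ℕ) < m_c then lam i else 0))
    (G_k : MultilinearMap ℂ (fun _ : Fin k => (Fin N → ℂ)) (Fin N → ℂ))
    (n : Fin N)
    (hNR : ∀ j : Fin k → Fin N, (∀ q : Fin k, ((j q : ℕ) < m_c)) →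
      (G_k fun q => Pi.single (j q) (1 : ℂ)) n ≠ 0 →
      0 < ((∑ q : Fin k, lam (j q)) - lam n).re)
    (X : Fin N → ℂ) (hX : ∀ i : Fin N, m_c ≤ (i : ℕ) → X i = 0) :
    IntegrableOn
      (fun s : ℝ => Complex.exp (-(s : ℂ) * lam n)
        * (G_k fun _ => (mexp (s • A_c)).mulVec X) n)
      (Set.Iic (0 : ℝ)) volume ∧
    (∫ s in Set.Iic (0 : ℝ), Complex.exp (-(s : ℂ) * lam n)
        * (G_k fun _ => (mexp (s • A_c)).mulVec X) n)
      = ∑ j : Fin k → Fin m_c,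
          (G_k fun q => Pi.single (Fin.castLE hmcN.le (j q)) (1 : ℂ)) n
            * (∏ q : Fin k, X (Fin.castLE hmcN.le (j q)))
            / ((∑ q : Fin k, lam (Fin.castLE hmcN.le (j q))) - lam n) := by
  set ι := Fin.castLE hmcN.le
  set coeff : (Fin k → Fin m_c) → ℂ := fun j =>
    (G_k fun q => Pi.single (ι (j q)) (1 : ℂ)) n * ∏ q, X (ι (j q))
  set rate : (Fin k → Fin m_c) → ℂ := fun j => (∑ q, lam (ι (j q))) - lam n
  have hflow : ∀ s : ℝ, (mexp (s • A_c)).mulVec X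
      = ∑ i : Fin m_c, (Complex.exp (s * lam (ι i)) * X (ι i)) • Pi.single (ι i) (1 : ℂ) := by
    intro s
    rw [hAc, mexp_smul_diagonal_mulVec]
    refine (sum_castLE_smul_single hmcN.le fun i hi => ?_).symm.trans ?_
    · simp [hX i hi]
    · simp [ι]
  have hexpand : ∀ s : ℝ,
      Complex.exp (-(s : ℂ) * lam n) * (G_k fun _ => (mexp (s • A_c)).mulVec X) n
        = ∑ j, coeff j * Complex.exp (rate j * s) := by
    intro s
    rw [hflow, G_k.map_const_sum_smul, Finset.sum_apply, Finset.mul_sum]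
    refine Finset.sum_congr rfl fun j _ => ?_
    simp only [Pi.smul_apply, smul_eq_mul, Finset.prod_mul_distrib, ← Complex.exp_sum, coeff, rate]
    rw [← Finset.mul_sum, show (∑ q, lam (ι (j q)) - lam n) * (s : ℂ)
      = -s * lam n + s * ∑ q, lam (ι (j q)) by ring, Complex.exp_add]
    ring
  have hdecay : ∀ j, coeff j ≠ 0 → 0 < (rate j).re := fun j hj =>
    hNR _ (fun q => (j q).is_lt) (left_ne_zero_of_mul hj)
  simp_rw [hexpand]
  refine ⟨integrable_finsetSum _ fun j _ => integrableOn_const_mul_cexp_Iic (hdecay j) 0, ?_⟩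
  rw [integral_finsetSum _ fun j _ => integrableOn_const_mul_cexp_Iic (hdecay j) 0]
  exact Finset.sum_congr rfl fun j _ => integral_const_mul_cexp_Iic_zero (hdecay j)

/-- Closed-form evaluation of the Lyapunov–Perron integral (the `n`-th component
of the leading-order invariant-manifold approximation) for a homogeneous nonlinearity of
degree `k`, under the non-resonance condition. -/
theorem lyapunov_perron_integral_closed_form
    (N k m_c : ℕ) (hk : 1 ≤ k) (hmc : 1 ≤ m_c) (hmcN : m_c < N)
    (lam : Fin N → ℂ)
    (A_c : Matrix (Fin N) (Fin N) ℂ)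
    (hAc : A_c = Matrix.diagonal (fun i : Fin N => if (i : ℕ) < m_c then lam i else 0))
    (G_k : MultilinearMap ℂ (fun _ : Fin k => (Fin N → ℂ)) (Fin N → ℂ))
    (n : Fin N) (hn : m_c ≤ (n : ℕ))
    (hNR : ∀ j : Fin k → Fin N, (∀ q : Fin k, ((j q : ℕ) < m_c)) →
      (G_k fun q => Pi.single (j q) (1 : ℂ)) n ≠ 0 →
      0 < ((∑ q : Fin k, lam (j q)) - lam n).re)
    (X : Fin N → ℂ) (hX : ∀ i : Fin N, m_c ≤ (i : ℕ) → X i = 0) :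
    IntegrableOn
      (fun s : ℝ => Complex.exp (-(s : ℂ) * lam n)
        * (G_k fun _ => (mexp (s • A_c)).mulVec X) n)
      (Set.Iic (0 : ℝ)) volume ∧
    (∫ s in Set.Iic (0 : ℝ), Complex.exp (-(s : ℂ) * lam n)
        * (G_k fun _ => (mexp (s • A_c)).mulVec X) n)
      = ∑ j : Fin k → Fin m_c,
          (G_k fun q => Pi.single (Fin.castLE hmcN.le (j q)) (1 : ℂ)) n
            * (∏ q : Fin k, X (Fin.castLE hmcN.le (j q)))
            / ((∑ q : Fin k, lam (Fin.castLE hmcN.le (j q))) - lam n) :=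
  lyapunov_perron_integral_closed_form_general N k m_c hmcN lam A_c hAc G_k n hNR X hX
end

section
/- Let m_c be a positive integer, λ_1,…,λ_{m_c}, λ_n ∈ ℂ, and A_c = diag(λ_1,…,λ_{m_c}) on ℂ^{m_c}. Let B^n_{ij} ∈ ℂ for 1 ≤ i,j ≤ m_c and define G(x) = Σ_{i,j=1}^{m_c} B^n_{ij} x_i x_j. Fix t ∈ ℝ, τ ≥ 0, ζ, σ_n ∈ ℂ, a continuous f_n : ℝ → ℂ, and X = (X_1,…,X_{m_c}) ∈ ℂ^{m_c}. If q_n : [t−τ, t] → ℂ solves q_n′(s) = λ_n q_n(s) + G(e^{(s−t)A_c}X) + σ_n f_n(s) with q_n(t−τ) = ζ, then q_n(t) = e^{λ_n τ} ζ + σ_n e^{λ_n t} ∫_{t−τ}^{t} e^{−λ_n s} f_n(s) ds + Σ_{i,j=1}^{m_c} D^n_{ij}(τ) B^n_{ij} X_i X_j, where D^n_{ij}(τ) = (1 − e^{−δ^n_{ij} τ})/δ^n_{ij} with δ^n_{ij} = λ_i + λ_j − λ_n whenever δ^n_{ij} ≠ 0, and D^n_{ij}(τ) = τ when δ^n_{ij}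 = 0. -/
open MeasureTheory intervalIntegral

/-!
Variation of constants: `s ↦ e^{-λ_n s} q_n(s)` has derivative `e^{-λ_n s}` times the forcing, so
`q_n(t)` is `e^{λ_n τ} ζ` plus `e^{λ_n t} ∫_{t-τ}^t e^{-λ_n s}(G(e^{(s-t)A_c}X) + σ_n f_n(s)) ds`.
Since `A_c` is diagonal, `G(e^{(s-t)A_c}X) = Σ B_{ij} X_i X_j e^{(λ_i+λ_j)(s-t)}`, and each term
contributes `B_{ij} X_i X_j ∫_{-τ}^0 e^{δ_{ij} r} dr = D_{ij}(τ) B_{ij} X_i X_j`.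
-/

open Complex

theorem mexp_smul_diagonal_mulVec_s11 {n : ℕ} (lam : Fin n → ℂ) (r : ℝ) (X : Fin n → ℂ)
    (i : Fin n) :
    (mexp (r • Matrix.diagonal lam)).mulVec X i = cexp (r * lam i) * X i := by
  have hdiag : r • Matrix.diagonal lam = Matrix.diagonal fun i => (r : ℂ) * lam i := by
    rw [← Matrix.diagonal_smul]
    congr 1
  rw [mexp, hdiag, Matrix.exp_diagonal, Matrix.mulVec_diagonal, Pi.coe_exp, ← exp_eq_exp_ℂ]

theorem eq_cexp_mul_add_integral_of_hasDerivWithinAt {q h : ℝ → ℂ} {c : ℂ} {a b : ℝ}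
    (hab : a ≤ b) (hh : IntervalIntegrable h volume a b)
    (hq : ∀ s ∈ Set.Icc a b, HasDerivWithinAt q (c * q s + h s) (Set.Icc a b) s) :
    q b = cexp (c * (b - a)) * q a + cexp (c * b) * ∫ s in a..b, cexp (-c * s) * h s := by
  have hexp : ∀ s : ℝ, HasDerivAt (fun s : ℝ => cexp (-c * s)) (-c * cexp (-c * s)) s := by
    intro s
    have hlin : HasDerivAt (fun s : ℝ => -c * (s : ℂ)) (-c) s := by
      simpa using ((hasDerivAt_id (s : ℂ)).const_mul (-c)).comp_ofReal
    simpa [mul_comm] using hlin.cexp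
  have hu : ∀ s ∈ Set.Icc a b, HasDerivWithinAt (fun s : ℝ => cexp (-c * s) * q s)
      (cexp (-c * s) * h s) (Set.Icc a b) s := by
    intro s hs
    refine ((hexp s).hasDerivWithinAt.mul (hq s hs)).congr_deriv ?_
    ring
  have hftc := integral_eq_sub_of_hasDerivAt_of_le hab
    (fun s hs => (hu s hs).continuousWithinAt)
    (fun s hs => (hu s (Set.Ioo_subset_Icc_self hs)).hasDerivAt (Icc_mem_nhds hs.1 hs.2))
    (hh.continuousOn_mul (by fun_prop : Continuous fun s : ℝ => cexp (-c * s)).continuousOn)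
  have hcancel : cexp (c * b) * cexp (-c * b) = 1 := by
    rw [← exp_add, neg_mul, add_neg_cancel, exp_zero]
  have hshift : cexp (c * b) * cexp (-c * a) = cexp (c * (b - a)) := by
    rw [← exp_add]
    congr 1
    ring
  rw [hftc]
  linear_combination (-q b) * hcancel + q a * hshift

/-- The coefficient `D^n_{ij}(τ)` with `δ = δ^n_{ij}`; it is `∫_{-τ}^0 e^{δ r} dr` in closed form. -/
noncomputable def opmCoeff (δ : ℂ) (τ : ℝ) : ℂ :=
  if δ = 0 then τ else (1 - cexp (-δ * τ)) / δ

theorem integral_cexp_mul_eq_opmCoeff (δ : ℂ) (τ : ℝ) :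
    ∫ r in -τ..0, cexp (δ * r) = opmCoeff δ τ := by
  by_cases hδ : δ = 0
  · simp [opmCoeff, hδ]
  · rw [integral_exp_mul_complex hδ, opmCoeff, if_neg hδ]
    push_cast
    rw [mul_zero, exp_zero, neg_mul, mul_neg]

theorem cexp_mul_integral_cexp_mul_cexp_eq_opmCoeff (c μ : ℂ) (t τ : ℝ) :
    cexp (c * t) * ∫ s in (t - τ)..t, cexp (-c * s) * cexp ((s - t) * μ) =
      opmCoeff (μ - c) τ := by
  have hkernel : ∀ s : ℝ, cexp (c * t) * (cexp (-c * s) * cexp ((s - t) * μ)) =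
      cexp ((μ - c) * ((s - t : ℝ) : ℂ)) := by
    intro s
    rw [← exp_add, ← exp_add]
    push_cast
    congr 1
    ring
  rw [← intervalIntegral.integral_const_mul, integral_congr fun s _ => hkernel s,
    integral_comp_sub_right (fun r : ℝ => cexp ((μ - c) * r)), sub_sub_cancel_left, sub_self,
    integral_cexp_mul_eq_opmCoeff]

theorem cexp_mul_integral_quadratic_eq_sum_opmCoeff {ι : Type*} [Fintype ι] (lam : ι → ℂ) (c : ℂ)
    (B : ι → ι → ℂ) (X : ι → ℂ) (t τ : ℝ) :
    cexp (c * t) * ∫ s in (t - τ)..t, cexp (-c * s) *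
        ∑ i, ∑ j, B i j * X i * X j * cexp ((s - t) * (lam i + lam j)) =
      ∑ i, ∑ j, opmCoeff (lam i + lam j - c) τ * B i j * X i * X j := by
  simp_rw [Finset.mul_sum]
  rw [integral_finsetSum fun i _ => (by fun_prop : Continuous _).intervalIntegrable _ _,
    Finset.mul_sum]
  refine Finset.sum_congr rfl fun i _ => ?_
  rw [integral_finsetSum fun j _ => (by fun_prop : Continuous _).intervalIntegrable _ _,
    Finset.mul_sum]
  refine Finset.sum_congr rfl fun j _ => ?_
  rw [← cexp_mul_integral_cexp_mul_cexp_eq_opmCoeff c (lam i + lam j) t τ]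
  simp only [← intervalIntegral.integral_const_mul, ← intervalIntegral.integral_mul_const]
  exact integral_congr fun s _ => by ring

theorem opm_parameterization_quadratic_time_dependent_general
    (m_c : ℕ)
    (lam : Fin m_c → ℂ) (lam_n : ℂ)
    (A_c : Matrix (Fin m_c) (Fin m_c) ℂ) (hAc : A_c = Matrix.diagonal lam)
    (B : Fin m_c → Fin m_c → ℂ)
    (G : (Fin m_c → ℂ) → ℂ)
    (hG : ∀ x : Fin m_c → ℂ, G x = ∑ i : Fin m_c, ∑ j : Fin m_c, B i j * x i * x j)
    (t τ : ℝ) (hτ : 0 ≤ τ) (ζ σ_n : ℂ)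
    (f_n : ℝ → ℂ) (hfn : Continuous f_n)
    (X : Fin m_c → ℂ)
    (q_n : ℝ → ℂ)
    (hq0 : q_n (t - τ) = ζ)
    (hq : ∀ s ∈ Set.Icc (t - τ) t,
      HasDerivWithinAt q_n
        (lam_n * q_n s + G ((mexp ((s - t) • A_c)).mulVec X) + σ_n * f_n s)
        (Set.Icc (t - τ) t) s) :
    q_n t = Complex.exp (lam_n * τ) * ζ
        + σ_n * Complex.exp (lam_n * t) * (∫ s in (t - τ)..t, Complex.exp (-lam_n * s) * f_n s)
        + ∑ i : Fin m_c, ∑ j : Fin m_c,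
            (if lam i + lam j - lam_n = 0 then (τ : ℂ)
              else (1 - Complex.exp (-(lam i + lam j - lam_n) * τ)) / (lam i + lam j - lam_n))
              * B i j * X i * X j := by
  subst hAc
  set quad : ℝ → ℂ := fun s => ∑ i, ∑ j, B i j * X i * X j * cexp ((s - t) * (lam i + lam j))
  have hquad : ∀ s : ℝ, G ((mexp ((s - t) • Matrix.diagonal lam)).mulVec X) = quad s := by
    intro s
    simp only [quad, hG, mexp_smul_diagonal_mulVec_s11, mul_add, exp_add]
    push_cast
    exact Finset.sum_congr rfl fun i _ => Finset.sum_congr rfl fun j _ => by ring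
  have hduhamel := eq_cexp_mul_add_integral_of_hasDerivWithinAt (by linarith : t - τ ≤ t)
    (h := fun s => quad s + σ_n * f_n s)
    ((show Continuous fun s => quad s + σ_n * f_n s by fun_prop).intervalIntegrable _ _)
    fun s hs => by simpa only [hquad, add_assoc] using hq s hs
  have hsplit : ∫ s in (t - τ)..t, cexp (-lam_n * s) * (quad s + σ_n * f_n s) =
      (∫ s in (t - τ)..t, cexp (-lam_n * s) * quad s) +
        σ_n * ∫ s in (t - τ)..t, cexp (-lam_n * s) * f_n s := by
    simp only [mul_add, mul_left_comm _ σ_n]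
    rw [integral_add ((by fun_prop : Continuous _).intervalIntegrable _ _)
      ((by fun_prop : Continuous _).intervalIntegrable _ _), intervalIntegral.integral_const_mul]
  have hlength : (t : ℂ) - ((t - τ : ℝ) : ℂ) = τ := by push_cast; ring
  rw [hduhamel, hsplit, mul_add, cexp_mul_integral_quadratic_eq_sum_opmCoeff, hq0, hlength]
  simp only [opmCoeff]
  ring

/-- Explicit time-dependent variational (OPM) parameterization formula for a
quadratic nonlinearity, with nonzero initial condition `ζ` at `s = t − τ` and time-dependent
forcing `σ_n f_n` on the `n`-th unresolved mode. -/
theorem opm_parameterization_quadratic_time_dependent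
    (m_c : ℕ) (hmc : 0 < m_c)
    (lam : Fin m_c → ℂ) (lam_n : ℂ)
    (A_c : Matrix (Fin m_c) (Fin m_c) ℂ) (hAc : A_c = Matrix.diagonal lam)
    (B : Fin m_c → Fin m_c → ℂ)
    (G : (Fin m_c → ℂ) → ℂ)
    (hG : ∀ x : Fin m_c → ℂ, G x = ∑ i : Fin m_c, ∑ j : Fin m_c, B i j * x i * x j)
    (t τ : ℝ) (hτ : 0 ≤ τ) (ζ σ_n : ℂ)
    (f_n : ℝ → ℂ) (hfn : Continuous f_n)
    (X : Fin m_c → ℂ)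
    (q_n : ℝ → ℂ)
    (hq0 : q_n (t - τ) = ζ)
    (hq : ∀ s ∈ Set.Icc (t - τ) t,
      HasDerivWithinAt q_n
        (lam_n * q_n s + G ((mexp ((s - t) • A_c)).mulVec X) + σ_n * f_n s)
        (Set.Icc (t - τ) t) s) :
    q_n t = Complex.exp (lam_n * τ) * ζ
        + σ_n * Complex.exp (lam_n * t) * (∫ s in (t - τ)..t, Complex.exp (-lam_n * s) * f_n s)
        + ∑ i : Fin m_c, ∑ j : Fin m_c,
            (if lam i + lam j - lam_n = 0 then (τ : ℂ)
              else (1 - Complex.exp (-(lam i + lam j - lam_n) * τ)) / (lam i + lam j - lam_n))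
              * B i j * X i * X j :=
  opm_parameterization_quadratic_time_dependent_general m_c lam lam_n A_c hAc B G hG t τ hτ ζ σ_n
    f_n hfn X q_n hq0 hq
end
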